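/- arXiv:2212.10347 — 3 statements merged into one kernel-verified Lean document; each statement's English description precedes it below -/
import Mathlib

section
/- Let V be a fixed n×n real matrix, G(t) := I + t·V invertible, and A(t) := det(G(t)) · G(t)^{-1} · G(t)^{-T}. Then d/dt A(t) = tr(V G(t)^{-1}) · A(t) − G(t)^{-1} V · A(t) − (G(t)^{-1} V · A(t))^T. -/
open scoped Matrix

attribute [local instance] Matrix.frobeniusNormedAddCommGroup Matrix.frobeniusNormedRing
  Matrix.frobeniusNormedSpace Matrix.frobeniusNormedAlgebra

/-!
Factoring `G t + s • V = G t * (1 + s • (G t)⁻¹ V)` reduces Jacobi's formula for `det G` to the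
linear coefficient `tr M` of the polynomial `det (1 + s • M)`. With `(G⁻¹)' = -G⁻¹ V G⁻¹` and the
product rule this gives the derivative of `A = det G • G⁻¹ G⁻ᵀ`.
-/

section Jacobi

open Polynomial

variable {𝕜 : Type*} [NontriviallyNormedField 𝕜] {n : Type*} [Fintype n] [DecidableEq n]

theorem Matrix.hasDerivAt_det_one_add_smul (M : Matrix n n 𝕜) :
    HasDerivAt (fun s : 𝕜 => (1 + s • M).det) M.trace 0 := by
  have hpoly := (Matrix.det (1 + (X : 𝕜[X]) • M.map C)).hasDerivAt 0
  rw [Matrix.derivative_det_one_add_X_smul] at hpoly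
  convert hpoly using 1
  funext s
  simp [eval_det, ← Matrix.smul_eq_mul_diagonal]

theorem Matrix.hasDerivAt_det_add_smul (M V : Matrix n n 𝕜) (hM : IsUnit M.det) :
    HasDerivAt (fun s : 𝕜 => (M + s • V).det) (M.det * (M⁻¹ * V).trace) 0 := by
  have hfactor : ∀ s : 𝕜, M + s • V = M * (1 + s • (M⁻¹ * V)) := fun s => by
    rw [Matrix.mul_add, Matrix.mul_one, Matrix.mul_smul, ← Matrix.mul_assoc,
      Matrix.mul_nonsing_inv M hM, Matrix.one_mul]
  simp only [hfactor, Matrix.det_mul]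
  exact ((M⁻¹ * V).hasDerivAt_det_one_add_smul).const_mul M.det

end Jacobi

section Calculus

variable {𝕜 : Type*} {m n : Type*} [Fintype m] [Fintype n] {t : 𝕜}

theorem HasDerivAt.matrix_transpose [NontriviallyNormedField 𝕜] {E : Type*}
    [NormedAddCommGroup E] [NormedSpace 𝕜 E] {f : 𝕜 → Matrix m n E} {f' : Matrix m n E}
    (hf : HasDerivAt f f' t) :
    HasDerivAt (fun s => (f s)ᵀ) f'ᵀ t :=
  ((Matrix.transposeLinearEquiv m n 𝕜 E).toLinearMap.mkContinuous 1 fun A => by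
    simp [Matrix.frobenius_norm_transpose]).hasFDerivAt.comp_hasDerivAt t hf

theorem HasDerivAt.matrix_inv [RCLike 𝕜] [DecidableEq n] {f : 𝕜 → Matrix n n 𝕜}
    {f' : Matrix n n 𝕜} (hf : HasDerivAt f f' t) (hdet : IsUnit (f t).det) :
    HasDerivAt (fun s => (f s)⁻¹) (-((f t)⁻¹ * f' * (f t)⁻¹)) t := by
  have hu : IsUnit (f t) := (Matrix.isUnit_iff_isUnit_det _).mpr hdet
  have hinv : ((hu.unit⁻¹ : (Matrix n n 𝕜)ˣ) : Matrix n n 𝕜) = (f t)⁻¹ := by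
    rw [Matrix.coe_units_inv, hu.unit_spec]
  have h := (hasFDerivAt_ringInverse hu.unit).comp_hasDerivAt_of_eq t hf hu.unit_spec
  simp only [Function.comp_def, ← Matrix.nonsing_inv_eq_ringInverse, hinv,
    neg_apply, ContinuousLinearMap.mulLeftRight_apply] at h
  exact h

end Calculus

/-- For `G t = I + t • V` invertible and `A t = det (G t) • ((G t)⁻¹ * (G t)⁻ᵀ)`,
`d/dt A = tr (V G⁻¹) • A − G⁻¹ V A − (G⁻¹ V A)ᵀ`. -/
theorem deriv_A_affine {n : ℕ} (V : Matrix (Fin n) (Fin n) ℝ)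
    (G A : ℝ → Matrix (Fin n) (Fin n) ℝ) (hG : ∀ s, G s = 1 + s • V)
    (hA : ∀ s, A s = (G s).det • ((G s)⁻¹ * ((G s)⁻¹)ᵀ))
    (t : ℝ) (hinv : IsUnit (G t).det) :
    HasDerivAt A ((V * (G t)⁻¹).trace • A t - (G t)⁻¹ * V * A t
      - ((G t)⁻¹ * V * A t)ᵀ) t := by
  have hGV : HasDerivAt G V t := by
    rw [funext hG]
    exact (((hasDerivAt_id t).smul_const V).const_add 1).congr_deriv (one_smul ℝ V)
  have hdet : HasDerivAt (fun s => (G s).det) ((G t).det * ((G t)⁻¹ * V).trace) t := by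
    have hline : (fun s => (G t + (s - t) • V).det) = fun s => (G s).det := by
      funext s
      rw [hG, hG, add_assoc, ← add_smul, add_sub_cancel]
    have h0 := (G t).hasDerivAt_det_add_smul V hinv
    exact hline ▸ HasDerivAt.comp_sub_const t t ((sub_self t).symm ▸ h0)
  have hGinv := hGV.matrix_inv hinv
  have hprod := hdet.smul (hGinv.mul hGinv.matrix_transpose)
  rw [hA t, funext hA]
  refine hprod.congr_deriv ?_
  rw [Matrix.trace_mul_comm]
  simp only [Pi.mul_apply, Matrix.mul_smul, Matrix.transpose_smul, Matrix.transpose_mul,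
    Matrix.transpose_neg, Matrix.transpose_transpose, Matrix.neg_mul, Matrix.mul_neg,
    smul_add, smul_neg, smul_smul, Matrix.mul_assoc]
  rw [mul_comm (G t).det]
  abel
end

section
/- Let G : Ω → Ω' be a smooth diffeomorphism between open sets of ℝ³ with det(DG) > 0, and f : Ω' → ℝ³ a C¹ vector field. Then (curl f) ∘ G = (1/det DG) · DG · curl((DG)^T · (f ∘ G)), where DG is the Jacobian of G. -/
/-!
Put `A = DG(x)` and `g = (DG)ᵀ (f ∘ G)`. The product and chain rules give
`Dg(x) = Aᵀ Df(G x) A + H` with `H i j = f(G x) ⬝ᵥ D²G(x)(eⱼ, eᵢ)`, and `H` is symmetric by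
Schwarz's theorem. The curl only sees the antisymmetric part of the Jacobian, so
`curl g(x) = skewVec (Aᵀ Df(G x) A)`, and the cofactor identity
`A · skewVec (Aᵀ M A) = det A · skewVec M` turns this into `A · curl g(x) = det A · curl f(G x)`.
-/

open scoped Matrix

/-- The Jacobian matrix of a map `G : ℝ³ → ℝ³` at `x`. -/
noncomputable def jacobian3 (G : (Fin 3 → ℝ) → (Fin 3 → ℝ)) (x : Fin 3 → ℝ) :
    Matrix (Fin 3) (Fin 3) ℝ :=
  Matrix.of fun i j => fderiv ℝ G x (Pi.single j 1) i

/-- The partial derivative `∂ⱼ fᵢ` of a vector field `f : ℝ³ → ℝ³` at `x`. -/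
noncomputable def pderiv3 (f : (Fin 3 → ℝ) → (Fin 3 → ℝ)) (j i : Fin 3) (x : Fin 3 → ℝ) : ℝ :=
  fderiv ℝ f x (Pi.single j 1) i

/-- The curl of a vector field `f : ℝ³ → ℝ³`:
`curl f = (∂₂f₃ − ∂₃f₂, ∂₃f₁ − ∂₁f₃, ∂₁f₂ − ∂₂f₁)` (0-indexed). -/
noncomputable def curl3 (f : (Fin 3 → ℝ) → (Fin 3 → ℝ)) (x : Fin 3 → ℝ) : Fin 3 → ℝ :=
  ![pderiv3 f 1 2 x - pderiv3 f 2 1 x,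
    pderiv3 f 2 0 x - pderiv3 f 0 2 x,
    pderiv3 f 0 1 x - pderiv3 f 1 0 x]

/-- The axial vector of `M - Mᵀ`, so that `curl3 f x = skewVec (jacobian3 f x)`. -/
def skewVec {R : Type*} [Sub R] (M : Matrix (Fin 3) (Fin 3) R) : Fin 3 → R :=
  ![M 2 1 - M 1 2, M 0 2 - M 2 0, M 1 0 - M 0 1]

theorem skewVec_add_of_isSymm {R : Type*} [AddCommGroup R] (M : Matrix (Fin 3) (Fin 3) R)
    {S : Matrix (Fin 3) (Fin 3) R} (hS : S.IsSymm) : skewVec (M + S) = skewVec M := by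
  have h : ∀ i j, S i j = S j i := fun i j => hS.apply j i
  ext i
  fin_cases i <;> simp [skewVec, h 2 1, h 0 2, h 1 0]

theorem mulVec_skewVec_transpose_mul_mul {R : Type*} [CommRing R]
    (A M : Matrix (Fin 3) (Fin 3) R) : A *ᵥ skewVec (Aᵀ * M * A) = A.det • skewVec M := by
  ext i
  fin_cases i <;>
  · simp [skewVec, Matrix.mulVec, dotProduct, Matrix.mul_apply, Fin.sum_univ_three,
      Matrix.det_fin_three]
    ring

theorem curl3_eq_skewVec (f : (Fin 3 → ℝ) → (Fin 3 → ℝ)) (x : Fin 3 → ℝ) :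
    curl3 f x = skewVec (jacobian3 f x) := rfl

theorem jacobian3_eq_toMatrix' (G : (Fin 3 → ℝ) → (Fin 3 → ℝ)) (x : Fin 3 → ℝ) :
    jacobian3 G x = LinearMap.toMatrix' (fderiv ℝ G x : (Fin 3 → ℝ) →ₗ[ℝ] Fin 3 → ℝ) := by
  ext i j
  simp [jacobian3]

theorem jacobian3_comp {f G : (Fin 3 → ℝ) → (Fin 3 → ℝ)} {x : Fin 3 → ℝ}
    (hf : DifferentiableAt ℝ f (G x)) (hG : DifferentiableAt ℝ G x) :
    jacobian3 (fun y => f (G y)) x = jacobian3 f (G x) * jacobian3 G x := by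
  simp only [jacobian3_eq_toMatrix', fderiv_fun_comp x hf hG, ContinuousLinearMap.toLinearMap_comp,
    LinearMap.toMatrix'_comp]

open ContinuousLinearMap in
theorem jacobian3_jacobian3_transpose_mulVec {G v : (Fin 3 → ℝ) → (Fin 3 → ℝ)}
    {x : Fin 3 → ℝ} (hDG : DifferentiableAt ℝ (fderiv ℝ G) x) (hv : DifferentiableAt ℝ v x) :
    jacobian3 (fun y => (jacobian3 G y)ᵀ *ᵥ v y) x =
      (jacobian3 G x)ᵀ * jacobian3 v x +
        Matrix.of fun i j => v x ⬝ᵥ fderiv ℝ (fderiv ℝ G) x (Pi.single j 1) (Pi.single i 1) := by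
  have hDG_entry : ∀ i k, HasFDerivAt (fun y => jacobian3 G y k i)
      ((proj k ∘L apply ℝ _ (Pi.single i 1)) ∘L fderiv ℝ (fderiv ℝ G) x) x := fun i k => by
    exact (proj k ∘L apply ℝ (Fin 3 → ℝ) (Pi.single i 1)).hasFDerivAt.comp x hDG.hasFDerivAt
  have hv_entry : ∀ k, HasFDerivAt (fun y => v y k) (proj k ∘L fderiv ℝ v x) x := fun k => by
    exact (hasFDerivAt_apply k (v x)).comp x hv.hasFDerivAt
  have hg : HasFDerivAt (fun y => (jacobian3 G y)ᵀ *ᵥ v y) _ x := hasFDerivAt_pi.2 fun i => by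
    exact HasFDerivAt.fun_sum (u := Finset.univ) fun k _ => (hDG_entry i k).fun_mul (hv_entry k)
  ext i j
  rw [jacobian3, Matrix.of_apply, hg.fderiv]
  simp [jacobian3, dotProduct, Matrix.mul_apply, Finset.sum_add_distrib]

theorem IsSymmSndFDerivAt.isSymm_dotProduct_fderiv_fderiv {ι κ : Type*} [Fintype ι]
    [DecidableEq ι] [Fintype κ] {G : (ι → ℝ) → κ → ℝ} {x : ι → ℝ} (hG : IsSymmSndFDerivAt ℝ G x)
    (u : κ → ℝ) :
    (Matrix.of fun i j => u ⬝ᵥ fderiv ℝ (fderiv ℝ G) x (Pi.single j 1) (Pi.single i 1)).IsSymm :=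
  Matrix.IsSymm.ext fun i j => by rw [Matrix.of_apply, Matrix.of_apply, hG]

/-- Covariant (Piola) transformation rule for the curl under a change of variables:
`(curl f) ∘ G = (1/det DG) · DG · curl((DG)ᵀ (f ∘ G))`. -/
theorem curl_comp_diffeo
    (Ω Ω' : Set (Fin 3 → ℝ)) (hΩ : IsOpen Ω) (hΩ' : IsOpen Ω')
    (G : (Fin 3 → ℝ) → (Fin 3 → ℝ)) (hbij : Set.BijOn G Ω Ω')
    (hG : ContDiffOn ℝ 2 G Ω)
    (hdet : ∀ x ∈ Ω, 0 < (jacobian3 G x).det)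
    (f : (Fin 3 → ℝ) → (Fin 3 → ℝ)) (hf : ContDiffOn ℝ 1 f Ω') :
    ∀ x ∈ Ω, curl3 f (G x)
      = ((jacobian3 G x).det)⁻¹ •
          (jacobian3 G x).mulVec
            (curl3 (fun y => ((jacobian3 G y)ᵀ).mulVec (f (G y))) x) := by
  intro x hx
  have hG2 : ContDiffAt ℝ 2 G x := hG.contDiffAt (hΩ.mem_nhds hx)
  have hGx : DifferentiableAt ℝ G x := hG2.differentiableAt two_ne_zero
  have hDG : DifferentiableAt ℝ (fderiv ℝ G) x :=
    (hG2.fderiv_right (m := 1) one_add_one_eq_two.le).differentiableAt one_ne_zero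
  have hfGx : DifferentiableAt ℝ f (G x) :=
    (hf.contDiffAt (hΩ'.mem_nhds (hbij.mapsTo hx))).differentiableAt one_ne_zero
  have hsymm := (hG2.isSymmSndFDerivAt (by simp [minSmoothness_of_isRCLikeNormedField]))
    |>.isSymm_dotProduct_fderiv_fderiv (f (G x))
  rw [curl3_eq_skewVec, curl3_eq_skewVec,
    jacobian3_jacobian3_transpose_mulVec (v := fun y => f (G y)) hDG (hfGx.comp x hGx),
    skewVec_add_of_isSymm _ hsymm, jacobian3_comp hfGx hGx, ← Matrix.mul_assoc,
    mulVec_skewVec_transpose_mul_mul, smul_smul, inv_mul_cancel₀ (hdet x hx).ne', one_smul]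
end

section
/- Let K, M be symmetric n×n real matrices with M positive definite, λ a simple eigenvalue with K u = λ M u, u ≠ 0, and u_⋆ a vector with u_⋆ᵀ M u = 1. Then the bordered matrix [[K − λM, −M u],[u_⋆ᵀ M, 0]] of size (n+1)×(n+1) is invertible. -/
/-!
Suppose the bordered matrix kills `(w, t)`, i.e. `A w = t • M u` and `(u⋆ᵀ M) w = 0`, where
`A = K − λM`. Since `A` is symmetric and `A u = 0`, `u` is a left null vector of `A`, so pairing
the first equation with `u` gives `t (uᵀ M u) = 0`, hence `t = 0` by positive definiteness.
Then `A w = 0`, so `w = s u` by simplicity, and the second equation reads `s (u⋆ᵀ M u) = s = 0`.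
-/

open scoped Matrix

namespace Matrix

variable {m R : Type*} [Fintype m] [Field R]

theorem fromBlocks_replicateCol_replicateRow_mulVec (A : Matrix m m R) (b c : m → R)
    (x : m ⊕ Unit → R) :
    fromBlocks A (replicateCol Unit b) (replicateRow Unit c) 0 *ᵥ x =
      Sum.elim (A *ᵥ (x ∘ Sum.inl) + x (Sum.inr ()) • b) fun _ => c ⬝ᵥ (x ∘ Sum.inl) := by
  ext (i | ⟨⟩) <;> simp [mulVec, dotProduct, mul_comm]

theorem eq_zero_of_bordered_mulVec_eq_zero {A : Matrix m m R} {b c u v : m → R}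
    (hker : ∀ w, A *ᵥ w = 0 → ∃ s : R, w = s • u) (hv : v ᵥ* A = 0) (hvb : v ⬝ᵥ b ≠ 0)
    (hcu : c ⬝ᵥ u ≠ 0) {w : m → R} {t : R} (hrow : A *ᵥ w + t • b = 0) (hcol : c ⬝ᵥ w = 0) :
    w = 0 ∧ t = 0 := by
  have ht : t = 0 := by
    have hpair := congrArg (v ⬝ᵥ ·) hrow
    simp only [dotProduct_add, dotProduct_mulVec, hv, zero_dotProduct, dotProduct_smul,
      smul_eq_mul, zero_add, dotProduct_zero] at hpair
    exact (mul_eq_zero.mp hpair).resolve_right hvb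
  obtain ⟨s, rfl⟩ := hker w (by simpa [ht] using hrow)
  have hs : s = 0 := by
    rw [dotProduct_smul, smul_eq_mul] at hcol
    exact (mul_eq_zero.mp hcol).resolve_right hcu
  exact ⟨by rw [hs, zero_smul], ht⟩

theorem isUnit_fromBlocks_replicateCol_replicateRow [DecidableEq m] {A : Matrix m m R}
    {b c u v : m → R} (hker : ∀ w, A *ᵥ w = 0 → ∃ s : R, w = s • u) (hv : v ᵥ* A = 0)
    (hvb : v ⬝ᵥ b ≠ 0) (hcu : c ⬝ᵥ u ≠ 0) :
    IsUnit (fromBlocks A (replicateCol Unit b) (replicateRow Unit c) 0) := by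
  rw [← mulVec_injective_iff_isUnit, ← coe_mulVecLin, ← LinearMap.ker_eq_bot,
    LinearMap.ker_eq_bot']
  intro x hx
  rw [mulVecLin_apply, fromBlocks_replicateCol_replicateRow_mulVec] at hx
  obtain ⟨hw, ht⟩ := eq_zero_of_bordered_mulVec_eq_zero hker hv hvb hcu
    (congrArg (· ∘ Sum.inl) hx) (congrFun hx (Sum.inr ()))
  ext (i | ⟨⟩)
  · exact congrFun hw i
  · exact ht

end Matrix

theorem bordered_matrix_isUnit_general {n : ℕ}
    (K M : Matrix (Fin n) (Fin n) ℝ) (hK : K.IsSymm)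
    (hM : M.PosDef) (lam : ℝ) (u ustar : Fin n → ℝ)
    (heig : K.mulVec u = lam • M.mulVec u)
    (hsimple : ∀ w, (K - lam • M).mulVec w = 0 → ∃ c : ℝ, w = c • u)
    (hnorm : ustar ⬝ᵥ M.mulVec u = 1) :
    IsUnit (Matrix.fromBlocks
      (K - lam • M)
      (Matrix.of fun i (_ : Unit) => -(M.mulVec u i))
      (Matrix.of fun (_ : Unit) j => (Matrix.vecMul ustar M) j)
      (0 : Matrix Unit Unit ℝ)) := by
  have hA : (K - lam • M).IsSymm :=
    hK.sub ((Matrix.isHermitian_iff_isSymm.mp hM.isHermitian).smul lam)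
  have hAu : (K - lam • M) *ᵥ u = 0 := by
    rw [Matrix.sub_mulVec, Matrix.smul_mulVec, heig, sub_self]
  have hu : u ≠ 0 := by
    rintro rfl
    simp at hnorm
  have huMu : u ⬝ᵥ -(M *ᵥ u) ≠ 0 := by
    simpa using (hM.dotProduct_mulVec_pos hu).ne'
  have hcu : ustar ᵥ* M ⬝ᵥ u ≠ 0 := by
    rw [← Matrix.dotProduct_mulVec, hnorm]
    exact one_ne_zero
  exact Matrix.isUnit_fromBlocks_replicateCol_replicateRow hsimple
    (by rw [← hA.eq, Matrix.vecMul_transpose, hAu]) huMu hcu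

/-- For a generalized eigenvalue problem `K u = λ M u` with `K, M` symmetric, `M` positive
definite, `λ` a simple eigenvalue (kernel of `K − λM` spanned by `u ≠ 0`), and a
normalization vector `u⋆` with `u⋆ᵀ M u = 1`, the bordered matrix
`[[K − λM, −M u], [u⋆ᵀ M, 0]]` is invertible. -/
theorem bordered_matrix_isUnit {n : ℕ}
    (K M : Matrix (Fin n) (Fin n) ℝ) (hK : K.IsSymm) (hMsymm : M.IsSymm)
    (hM : M.PosDef) (lam : ℝ) (u ustar : Fin n → ℝ) (hu : u ≠ 0)
    (heig : K.mulVec u = lam • M.mulVec u)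
    (hsimple : ∀ w, (K - lam • M).mulVec w = 0 → ∃ c : ℝ, w = c • u)
    (hnorm : ustar ⬝ᵥ M.mulVec u = 1) :
    IsUnit (Matrix.fromBlocks
      (K - lam • M)
      (Matrix.of fun i (_ : Unit) => -(M.mulVec u i))
      (Matrix.of fun (_ : Unit) j => (Matrix.vecMul ustar M) j)
      (0 : Matrix Unit Unit ℝ)) :=
  bordered_matrix_isUnit_general K M hK hM lam u ustar heig hsimple hnorm
end
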